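/- Let k ≥ 0, T > 0, and let u : [0,T] × ℝ → ℝ be smooth such that t ↦ u(t,·) is a C¹ map into Schwartz space and u solves the Camassa–Holm equation in nonlocal form: ∂_t u + u ∂_x u + ∂_x P = 0 with P(t,·) = K * (u(t,·)² + (1/2)(∂_x u(t,·))² + 2k u(t,·)) and K(x) = (1/2) e^{−|x|}. Then the functional H₂(u(t,·)) = (1/2)∫_ℝ (u(t,x)³ + u(t,x)(∂_x u(t,x))² + 2k u(t,x)²) dx is constant in t on [0,T]. -/

import Mathlib

open MeasureTheory SchwartzMap
open Set Filter Real Topology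

/-- Convolution with the kernel `K(x) = (1/2) e^{−|x|}`. -/
noncomputable def KConv (f : ℝ → ℝ) : ℝ → ℝ :=
  fun x => ∫ y : ℝ, (1 / 2) * Real.exp (-|x - y|) * f y

noncomputable def KA (f : ℝ → ℝ) (x : ℝ) : ℝ := ∫ y in Set.Iic x, Real.exp y * f y
noncomputable def KB (f : ℝ → ℝ) (x : ℝ) : ℝ := ∫ y in Set.Ioi x, Real.exp (-y) * f y
noncomputable def KQ (f : ℝ → ℝ) (x : ℝ) : ℝ :=
  (1/2) * (Real.exp x * KB f x - Real.exp (-x) * KA f x)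

variable {f : ℝ → ℝ}

lemma KA_integrableOn (hc : Continuous f) (hi : Integrable f) (x : ℝ) :
    IntegrableOn (fun y => Real.exp y * f y) (Set.Iic x) := by
  refine Integrable.mono' ((hi.norm.const_mul (Real.exp x)).restrict)
    ((Real.continuous_exp.mul hc)).aestronglyMeasurable.restrict ?_
  refine (ae_restrict_iff' measurableSet_Iic).2 (ae_of_all _ fun y hy => ?_)
  have h1 : Real.exp y ≤ Real.exp x := Real.exp_le_exp.2 hy
  have h2 : ‖Real.exp y * f y‖ = Real.exp y * ‖f y‖ := by
    rw [norm_mul, Real.norm_eq_abs, abs_of_pos (Real.exp_pos y)]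
  rw [h2]
  exact mul_le_mul_of_nonneg_right h1 (norm_nonneg _)

lemma KB_integrableOn (hc : Continuous f) (hi : Integrable f) (x : ℝ) :
    IntegrableOn (fun y => Real.exp (-y) * f y) (Set.Ioi x) := by
  refine Integrable.mono' ((hi.norm.const_mul (Real.exp (-x))).restrict)
    ((Real.continuous_exp.comp continuous_neg).mul hc).aestronglyMeasurable.restrict ?_
  refine (ae_restrict_iff' measurableSet_Ioi).2 (ae_of_all _ fun y hy => ?_)
  have h1 : Real.exp (-y) ≤ Real.exp (-x) := Real.exp_le_exp.2 (by linarith [hy.out])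
  have h2 : ‖Real.exp (-y) * f y‖ = Real.exp (-y) * ‖f y‖ := by
    rw [norm_mul, Real.norm_eq_abs, abs_of_pos (Real.exp_pos _)]
  rw [h2]
  exact mul_le_mul_of_nonneg_right h1 (norm_nonneg _)

lemma KConv_integrand_integrable (hc : Continuous f) (hi : Integrable f) (x : ℝ) :
    Integrable (fun y => (1 / 2) * Real.exp (-|x - y|) * f y) := by
  refine Integrable.mono' hi.norm
    (((continuous_const.mul
      (Real.continuous_exp.comp ((continuous_const.sub continuous_id).abs.neg))).mul
      hc)).aestronglyMeasurable (ae_of_all _ fun y => ?_)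
  have h1 : Real.exp (-|x - y|) ≤ 1 := Real.exp_le_one_iff.2 (neg_nonpos.2 (abs_nonneg _))
  have h2 : (0:ℝ) < Real.exp (-|x - y|) := Real.exp_pos _
  rw [norm_mul, norm_mul]
  calc ‖(1:ℝ)/2‖ * ‖Real.exp (-|x-y|)‖ * ‖f y‖ ≤ (1/2) * 1 * ‖f y‖ := by
        apply mul_le_mul_of_nonneg_right _ (norm_nonneg _)
        rw [Real.norm_eq_abs (rexp _), abs_of_pos h2, Real.norm_eq_abs]
        rw [abs_of_pos (by norm_num : (0:ℝ) < 1/2)]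
        nlinarith [h1, h2.le]
    _ ≤ ‖f y‖ := by nlinarith [norm_nonneg (f y)]

lemma KConv_eq (hc : Continuous f) (hi : Integrable f) (x : ℝ) :
    KConv f x = (1/2) * (Real.exp (-x) * KA f x + Real.exp x * KB f x) := by
  have hint := KConv_integrand_integrable hc hi x
  have hsplit := intervalIntegral.integral_Iic_add_Ioi (b := x) hint.integrableOn hint.integrableOn
  have h1 : ∫ y in Set.Iic x, (1 / 2) * Real.exp (-|x - y|) * f y
      = (1/2) * (Real.exp (-x) * KA f x) := by
    rw [show (1/2) * (Real.exp (-x) * KA f x) = ∫ y in Set.Iic x,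
        (1/2) * Real.exp (-x) * (Real.exp y * f y) by
      rw [KA, ← mul_assoc, ← integral_const_mul]]
    refine setIntegral_congr_fun measurableSet_Iic fun y hy => ?_
    have : |x - y| = x - y := abs_of_nonneg (by linarith [hy.out])
    rw [this, show -(x-y) = -x + y by ring, Real.exp_add]
    ring
  have h2 : ∫ y in Set.Ioi x, (1 / 2) * Real.exp (-|x - y|) * f y
      = (1/2) * (Real.exp x * KB f x) := by
    rw [show (1/2) * (Real.exp x * KB f x) = ∫ y in Set.Ioi x,
        (1/2) * Real.exp x * (Real.exp (-y) * f y) by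
      rw [KB, ← mul_assoc, ← integral_const_mul]]
    refine setIntegral_congr_fun measurableSet_Ioi fun y hy => ?_
    have : |x - y| = -(x - y) := abs_of_nonpos (by linarith [hy.out])
    rw [this, show -(-(x-y)) = x + -y by ring, Real.exp_add]
    ring
  rw [KConv, ← hsplit, h1, h2]
  ring

lemma hasDerivAt_KA (hc : Continuous f) (hi : Integrable f) (x : ℝ) :
    HasDerivAt (KA f) (Real.exp x * f x) x := by
  have key : ∀ z, KA f z = KA f 0 + ∫ y in (0:ℝ)..z, Real.exp y * f y := by
    intro z
    rw [← intervalIntegral.integral_Iic_sub_Iic (KA_integrableOn hc hi 0)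
      (KA_integrableOn hc hi z)]
    simp [KA]
  have h : HasDerivAt (fun z => KA f 0 + ∫ y in (0:ℝ)..z, Real.exp y * f y)
      (Real.exp x * f x) x := by
    refine HasDerivAt.const_add _ ?_
    refine intervalIntegral.integral_hasDerivAt_right
      ((Real.continuous_exp.mul hc).intervalIntegrable _ _)
      ((Real.continuous_exp.mul hc).stronglyMeasurable.stronglyMeasurableAtFilter)
      (Real.continuous_exp.mul hc).continuousAt
  exact h.congr_of_eventuallyEq (Filter.Eventually.of_forall key)

lemma hasDerivAt_KB (hc : Continuous f) (hi : Integrable f) (x : ℝ) :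
    HasDerivAt (KB f) (-(Real.exp (-x) * f x)) x := by
  set b := x + 1 with hb
  have key : ∀ z ∈ Set.Ioo (x - 1) b, KB f z
      = KB f b - ∫ y in b..z, Real.exp (-y) * f y := by
    intro z hz
    have hzb : z ≤ b := hz.2.le
    have hsplit : KB f z = (∫ y in Set.Ioc z b, Real.exp (-y) * f y) + KB f b := by
      rw [KB, KB, ← setIntegral_union (Set.Ioc_disjoint_Ioi le_rfl) measurableSet_Ioi
        ((KB_integrableOn hc hi z).mono_set Set.Ioc_subset_Ioi_self)
        (KB_integrableOn hc hi b), Set.Ioc_union_Ioi_eq_Ioi hzb]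
    rw [hsplit, intervalIntegral.integral_symm,
      intervalIntegral.integral_of_le hzb]
    ring
  have h : HasDerivAt (fun z => KB f b - ∫ y in b..z, Real.exp (-y) * f y)
      (-(Real.exp (-x) * f x)) x := by
    have hcc : Continuous fun y => Real.exp (-y) * f y :=
      (Real.continuous_exp.comp continuous_neg).mul hc
    have := intervalIntegral.integral_hasDerivAt_right
      (hcc.intervalIntegrable b x)
      (hcc.stronglyMeasurable.stronglyMeasurableAtFilter)
      hcc.continuousAt
    simpa using (this.const_sub (KB f b))
  refine h.congr_of_eventuallyEq ?_
  filter_upwards [Ioo_mem_nhds (by linarith : x - 1 < x) (by linarith : x < b)] with z hz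
  exact key z hz

lemma hasDerivAt_KConv (hc : Continuous f) (hi : Integrable f) (x : ℝ) :
    HasDerivAt (KConv f) (KQ f x) x := by
  have heq : KConv f = fun z => (1/2) * (Real.exp (-z) * KA f z + Real.exp z * KB f z) :=
    funext fun z => KConv_eq hc hi z
  rw [heq, KQ]
  have hA := hasDerivAt_KA hc hi x
  have hB := hasDerivAt_KB hc hi x
  have hex : HasDerivAt (fun z : ℝ => Real.exp (-z)) (-Real.exp (-x)) x := by
    simpa [Function.comp_def] using (Real.hasDerivAt_exp (-x)).comp x (hasDerivAt_neg x)
  have hex2 : HasDerivAt (fun z : ℝ => Real.exp z) (Real.exp x) x := Real.hasDerivAt_exp x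
  have h := (((hex.mul hA).add (hex2.mul hB)).const_mul (1/2 : ℝ))
  refine h.congr_deriv ?_
  have hpos := Real.exp_pos x
  have : Real.exp (-x) * Real.exp x = 1 := by
    rw [← Real.exp_add]; simp
  nlinarith [this]

lemma deriv_KConv (hc : Continuous f) (hi : Integrable f) :
    deriv (KConv f) = KQ f :=
  funext fun x => (hasDerivAt_KConv hc hi x).deriv

lemma hasDerivAt_KQ (hc : Continuous f) (hi : Integrable f) (x : ℝ) :
    HasDerivAt (KQ f) (KConv f x - f x) x := by
  have hA := hasDerivAt_KA hc hi x
  have hB := hasDerivAt_KB hc hi x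
  have hex : HasDerivAt (fun z : ℝ => Real.exp (-z)) (-Real.exp (-x)) x := by
    simpa [Function.comp_def] using (Real.hasDerivAt_exp (-x)).comp x (hasDerivAt_neg x)
  have hex2 : HasDerivAt (fun z : ℝ => Real.exp z) (Real.exp x) x := Real.hasDerivAt_exp x
  have h := (((hex2.mul hB).sub (hex.mul hA)).const_mul (1/2 : ℝ))
  have heq : KQ f = fun z => (1/2) * (Real.exp z * KB f z - Real.exp (-z) * KA f z) := rfl
  rw [heq]
  refine h.congr_deriv ?_
  rw [KConv_eq hc hi x]
  have : Real.exp (-x) * Real.exp x = 1 := by rw [← Real.exp_add]; simp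
  linear_combination (-(f x)) * this

lemma expA_abs_le (hc : Continuous f) (hi : Integrable f) (x : ℝ) :
    |Real.exp (-x) * KA f x| ≤ ∫ y, ‖f y‖ := by
  have h1 : ‖KA f x‖ ≤ ∫ y in Set.Iic x, ‖Real.exp y * f y‖ :=
    norm_integral_le_integral_norm _
  have h2 : ∫ y in Set.Iic x, ‖Real.exp y * f y‖ ≤ ∫ y in Set.Iic x, Real.exp x * ‖f y‖ := by
    refine setIntegral_mono_on ((KA_integrableOn hc hi x).norm)
      ((hi.norm.const_mul _).integrableOn) measurableSet_Iic fun y hy => ?_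
    rw [norm_mul, Real.norm_eq_abs (Real.exp y), abs_of_pos (Real.exp_pos y)]
    exact mul_le_mul_of_nonneg_right (Real.exp_le_exp.2 hy) (norm_nonneg _)
  have h3 : ∫ y in Set.Iic x, Real.exp x * ‖f y‖ = Real.exp x * ∫ y in Set.Iic x, ‖f y‖ :=
    integral_const_mul _ _
  have h4 : ∫ y in Set.Iic x, ‖f y‖ ≤ ∫ y, ‖f y‖ :=
    setIntegral_le_integral hi.norm (ae_of_all _ fun y => norm_nonneg _)
  have h5 : |KA f x| ≤ Real.exp x * ∫ y, ‖f y‖ := by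
    rw [← Real.norm_eq_abs]
    calc ‖KA f x‖ ≤ _ := h1
      _ ≤ _ := h2
      _ = _ := h3
      _ ≤ _ := mul_le_mul_of_nonneg_left h4 (Real.exp_pos x).le
  rw [abs_mul, abs_of_pos (Real.exp_pos (-x))]
  calc Real.exp (-x) * |KA f x| ≤ Real.exp (-x) * (Real.exp x * ∫ y, ‖f y‖) :=
        mul_le_mul_of_nonneg_left h5 (Real.exp_pos _).le
    _ = (Real.exp (-x) * Real.exp x) * ∫ y, ‖f y‖ := by ring
    _ = ∫ y, ‖f y‖ := by rw [← Real.exp_add]; simp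

lemma expB_abs_le (hc : Continuous f) (hi : Integrable f) (x : ℝ) :
    |Real.exp x * KB f x| ≤ ∫ y, ‖f y‖ := by
  have h1 : ‖KB f x‖ ≤ ∫ y in Set.Ioi x, ‖Real.exp (-y) * f y‖ :=
    norm_integral_le_integral_norm _
  have h2 : ∫ y in Set.Ioi x, ‖Real.exp (-y) * f y‖
      ≤ ∫ y in Set.Ioi x, Real.exp (-x) * ‖f y‖ := by
    refine setIntegral_mono_on ((KB_integrableOn hc hi x).norm)
      ((hi.norm.const_mul _).integrableOn) measurableSet_Ioi fun y hy => ?_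
    rw [norm_mul, Real.norm_eq_abs (Real.exp (-y)), abs_of_pos (Real.exp_pos _)]
    exact mul_le_mul_of_nonneg_right (Real.exp_le_exp.2 (by linarith [hy.out])) (norm_nonneg _)
  have h3 : ∫ y in Set.Ioi x, Real.exp (-x) * ‖f y‖
      = Real.exp (-x) * ∫ y in Set.Ioi x, ‖f y‖ := integral_const_mul _ _
  have h4 : ∫ y in Set.Ioi x, ‖f y‖ ≤ ∫ y, ‖f y‖ :=
    setIntegral_le_integral hi.norm (ae_of_all _ fun y => norm_nonneg _)
  have h5 : |KB f x| ≤ Real.exp (-x) * ∫ y, ‖f y‖ := by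
    rw [← Real.norm_eq_abs]
    calc ‖KB f x‖ ≤ _ := h1
      _ ≤ _ := h2
      _ = _ := h3
      _ ≤ _ := mul_le_mul_of_nonneg_left h4 (Real.exp_pos _).le
  rw [abs_mul, abs_of_pos (Real.exp_pos x)]
  calc Real.exp x * |KB f x| ≤ Real.exp x * (Real.exp (-x) * ∫ y, ‖f y‖) :=
        mul_le_mul_of_nonneg_left h5 (Real.exp_pos _).le
    _ = (Real.exp (-x) * Real.exp x) * ∫ y, ‖f y‖ := by ring
    _ = ∫ y, ‖f y‖ := by rw [← Real.exp_add]; simp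

lemma abs_KConv_le (hc : Continuous f) (hi : Integrable f) (x : ℝ) :
    |KConv f x| ≤ ∫ y, ‖f y‖ := by
  rw [KConv_eq hc hi x]
  have := expA_abs_le hc hi x
  have := expB_abs_le hc hi x
  have hnn : (0:ℝ) ≤ ∫ y, ‖f y‖ := integral_nonneg fun y => norm_nonneg _
  calc |1/2 * (Real.exp (-x) * KA f x + Real.exp x * KB f x)|
      ≤ 1/2 * (|Real.exp (-x) * KA f x| + |Real.exp x * KB f x|) := by
        rw [abs_mul]
        rw [abs_of_pos (by norm_num : (0:ℝ) < 1/2)]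
        exact mul_le_mul_of_nonneg_left (abs_add_le _ _) (by norm_num)
    _ ≤ ∫ y, ‖f y‖ := by linarith

lemma abs_KQ_le (hc : Continuous f) (hi : Integrable f) (x : ℝ) :
    |KQ f x| ≤ ∫ y, ‖f y‖ := by
  rw [KQ]
  have := expA_abs_le hc hi x
  have := expB_abs_le hc hi x
  have hnn : (0:ℝ) ≤ ∫ y, ‖f y‖ := integral_nonneg fun y => norm_nonneg _
  calc |1/2 * (Real.exp x * KB f x - Real.exp (-x) * KA f x)|
      ≤ 1/2 * (|Real.exp x * KB f x| + |Real.exp (-x) * KA f x|) := by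
        rw [abs_mul, abs_of_pos (by norm_num : (0:ℝ) < 1/2)]
        exact mul_le_mul_of_nonneg_left (abs_sub _ _) (by norm_num)
    _ ≤ ∫ y, ‖f y‖ := by linarith

lemma expA_eq_indicator (x : ℝ) :
    Real.exp (-x) * KA f x
      = ∫ y, Set.indicator (Set.Iic x) (fun y => Real.exp (y - x) * f y) y := by
  rw [MeasureTheory.integral_indicator measurableSet_Iic, KA, ← integral_const_mul]
  refine setIntegral_congr_fun measurableSet_Iic fun y _ => ?_
  rw [show y - x = -x + y by ring, Real.exp_add]; ring

lemma expB_eq_indicator (x : ℝ) :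
    Real.exp x * KB f x
      = ∫ y, Set.indicator (Set.Ioi x) (fun y => Real.exp (x - y) * f y) y := by
  rw [MeasureTheory.integral_indicator measurableSet_Ioi, KB, ← integral_const_mul]
  refine setIntegral_congr_fun measurableSet_Ioi fun y _ => ?_
  rw [show x - y = x + -y by ring, Real.exp_add]; ring

lemma indicator_bound_A (hx : True) (x y : ℝ) :
    ‖Set.indicator (Set.Iic x) (fun y => Real.exp (y - x) * f y) y‖ ≤ ‖f y‖ := by
  by_cases hy : y ∈ Set.Iic x
  · rw [Set.indicator_of_mem hy, norm_mul, Real.norm_eq_abs (Real.exp _),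
      abs_of_pos (Real.exp_pos _)]
    calc Real.exp (y - x) * ‖f y‖ ≤ 1 * ‖f y‖ :=
          mul_le_mul_of_nonneg_right (Real.exp_le_one_iff.2 (by linarith [hy.out])) (norm_nonneg _)
      _ = ‖f y‖ := one_mul _
  · rw [Set.indicator_of_notMem hy]; simp

lemma indicator_bound_B (hx : True) (x y : ℝ) :
    ‖Set.indicator (Set.Ioi x) (fun y => Real.exp (x - y) * f y) y‖ ≤ ‖f y‖ := by
  by_cases hy : y ∈ Set.Ioi x
  · rw [Set.indicator_of_mem hy, norm_mul, Real.norm_eq_abs (Real.exp _),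
      abs_of_pos (Real.exp_pos _)]
    calc Real.exp (x - y) * ‖f y‖ ≤ 1 * ‖f y‖ :=
          mul_le_mul_of_nonneg_right
            (Real.exp_le_one_iff.2 (by linarith [hy.out])) (norm_nonneg _)
      _ = ‖f y‖ := one_mul _
  · rw [Set.indicator_of_notMem hy]; simp

lemma indicator_meas_A (hc : Continuous f) (x : ℝ) :
    AEStronglyMeasurable (Set.indicator (Set.Iic x) (fun y => Real.exp (y - x) * f y))
      (volume : Measure ℝ) :=
  (((Real.continuous_exp.comp (continuous_id.sub continuous_const)).mul
    hc).aestronglyMeasurable).indicator measurableSet_Iic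

lemma indicator_meas_B (hc : Continuous f) (x : ℝ) :
    AEStronglyMeasurable (Set.indicator (Set.Ioi x) (fun y => Real.exp (x - y) * f y))
      (volume : Measure ℝ) :=
  (((Real.continuous_exp.comp (continuous_const.sub continuous_id)).mul
    hc).aestronglyMeasurable).indicator measurableSet_Ioi

lemma tendsto_expA_atTop (hc : Continuous f) (hi : Integrable f) :
    Tendsto (fun x => Real.exp (-x) * KA f x) atTop (𝓝 0) := by
  have key : Tendsto (fun x => ∫ y, Set.indicator (Set.Iic x)
      (fun y => Real.exp (y - x) * f y) y) atTop (𝓝 (∫ _ : ℝ, (0:ℝ))) := by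
    refine tendsto_integral_filter_of_dominated_convergence (fun y => ‖f y‖)
      (Filter.Eventually.of_forall fun x => indicator_meas_A hc x)
      (Filter.Eventually.of_forall fun x =>
        ae_of_all _ fun y => indicator_bound_A trivial x y)
      hi.norm (ae_of_all _ fun y => ?_)
    have hev : ∀ᶠ x in atTop, Set.indicator (Set.Iic x)
        (fun y => Real.exp (y - x) * f y) y = Real.exp y * Real.exp (-x) * f y := by
      filter_upwards [eventually_ge_atTop y] with x hx
      rw [Set.indicator_of_mem (Set.mem_Iic.2 hx), show y - x = y + -x by ring,
        Real.exp_add]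
    have hlim : Tendsto (fun x => Real.exp y * Real.exp (-x) * f y) atTop (𝓝 0) := by
      have : Tendsto (fun x : ℝ => Real.exp (-x)) atTop (𝓝 0) :=
        Real.tendsto_exp_neg_atTop_nhds_zero
      simpa using (this.const_mul (Real.exp y)).mul_const (f y)
    exact hlim.congr' (EventuallyEq.symm hev)
  simp only [integral_zero] at key
  exact key.congr fun x => (expA_eq_indicator x).symm

lemma tendsto_expA_atBot (hc : Continuous f) (hi : Integrable f) :
    Tendsto (fun x => Real.exp (-x) * KA f x) atBot (𝓝 0) := by
  have key : Tendsto (fun x => ∫ y, Set.indicator (Set.Iic x)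
      (fun y => Real.exp (y - x) * f y) y) atBot (𝓝 (∫ _ : ℝ, (0:ℝ))) := by
    refine tendsto_integral_filter_of_dominated_convergence (fun y => ‖f y‖)
      (Filter.Eventually.of_forall fun x => indicator_meas_A hc x)
      (Filter.Eventually.of_forall fun x =>
        ae_of_all _ fun y => indicator_bound_A trivial x y)
      hi.norm (ae_of_all _ fun y => ?_)
    have hev : ∀ᶠ x in atBot, Set.indicator (Set.Iic x)
        (fun y => Real.exp (y - x) * f y) y = 0 := by
      filter_upwards [eventually_lt_atBot y] with x hx
      exact Set.indicator_of_notMem (by simpa using hx) _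
    exact (tendsto_const_nhds).congr' (EventuallyEq.symm hev)
  simp only [integral_zero] at key
  exact key.congr fun x => (expA_eq_indicator x).symm

lemma tendsto_expB_atTop (hc : Continuous f) (hi : Integrable f) :
    Tendsto (fun x => Real.exp x * KB f x) atTop (𝓝 0) := by
  have key : Tendsto (fun x => ∫ y, Set.indicator (Set.Ioi x)
      (fun y => Real.exp (x - y) * f y) y) atTop (𝓝 (∫ _ : ℝ, (0:ℝ))) := by
    refine tendsto_integral_filter_of_dominated_convergence (fun y => ‖f y‖)
      (Filter.Eventually.of_forall fun x => indicator_meas_B hc x)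
      (Filter.Eventually.of_forall fun x =>
        ae_of_all _ fun y => indicator_bound_B trivial x y)
      hi.norm (ae_of_all _ fun y => ?_)
    have hev : ∀ᶠ x in atTop, Set.indicator (Set.Ioi x)
        (fun y => Real.exp (x - y) * f y) y = 0 := by
      filter_upwards [eventually_ge_atTop y] with x hx
      exact Set.indicator_of_notMem (by simpa using hx) _
    exact (tendsto_const_nhds).congr' (EventuallyEq.symm hev)
  simp only [integral_zero] at key
  exact key.congr fun x => (expB_eq_indicator x).symm

lemma tendsto_expB_atBot (hc : Continuous f) (hi : Integrable f) :
    Tendsto (fun x => Real.exp x * KB f x) atBot (𝓝 0) := by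
  have key : Tendsto (fun x => ∫ y, Set.indicator (Set.Ioi x)
      (fun y => Real.exp (x - y) * f y) y) atBot (𝓝 (∫ _ : ℝ, (0:ℝ))) := by
    refine tendsto_integral_filter_of_dominated_convergence (fun y => ‖f y‖)
      (Filter.Eventually.of_forall fun x => indicator_meas_B hc x)
      (Filter.Eventually.of_forall fun x =>
        ae_of_all _ fun y => indicator_bound_B trivial x y)
      hi.norm (ae_of_all _ fun y => ?_)
    have hev : ∀ᶠ x in atBot, Set.indicator (Set.Ioi x)
        (fun y => Real.exp (x - y) * f y) y = Real.exp x * Real.exp (-y) * f y := by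
      filter_upwards [eventually_lt_atBot y] with x hx
      rw [Set.indicator_of_mem (Set.mem_Ioi.2 hx), show x - y = x + -y by ring,
        Real.exp_add]
    have hlim : Tendsto (fun x => Real.exp x * Real.exp (-y) * f y) atBot (𝓝 0) := by
      have : Tendsto (fun x : ℝ => Real.exp x) atBot (𝓝 0) := Real.tendsto_exp_atBot
      simpa using (this.mul_const (Real.exp (-y))).mul_const (f y)
    exact hlim.congr' (EventuallyEq.symm hev)
  simp only [integral_zero] at key
  exact key.congr fun x => (expB_eq_indicator x).symm

lemma tendsto_KConv_atTop (hc : Continuous f) (hi : Integrable f) :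
    Tendsto (KConv f) atTop (𝓝 0) := by
  have h := ((tendsto_expA_atTop hc hi).add (tendsto_expB_atTop hc hi)).const_mul (1/2 : ℝ)
  simp only [add_zero, mul_zero] at h
  exact h.congr fun x => (KConv_eq hc hi x).symm

lemma tendsto_KConv_atBot (hc : Continuous f) (hi : Integrable f) :
    Tendsto (KConv f) atBot (𝓝 0) := by
  have h := ((tendsto_expA_atBot hc hi).add (tendsto_expB_atBot hc hi)).const_mul (1/2 : ℝ)
  simp only [add_zero, mul_zero] at h
  exact h.congr fun x => (KConv_eq hc hi x).symm

lemma tendsto_KQ_atTop (hc : Continuous f) (hi : Integrable f) :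
    Tendsto (KQ f) atTop (𝓝 0) := by
  have h := ((tendsto_expB_atTop hc hi).sub (tendsto_expA_atTop hc hi)).const_mul (1/2 : ℝ)
  simp only [sub_zero, mul_zero] at h
  exact h.congr fun x => rfl

lemma tendsto_KQ_atBot (hc : Continuous f) (hi : Integrable f) :
    Tendsto (KQ f) atBot (𝓝 0) := by
  have h := ((tendsto_expB_atBot hc hi).sub (tendsto_expA_atBot hc hi)).const_mul (1/2 : ℝ)
  simp only [sub_zero, mul_zero] at h
  exact h.congr fun x => rfl

lemma mixed_partial {U : ℝ × ℝ → ℝ} {V : Set ℝ} (hV : IsOpen V)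
    (hU : ∀ s ∈ V, ∀ y : ℝ, ContDiffAt ℝ 2 U (s, y))
    {α : ℝ → ℝ → ℝ}
    (hα : ∀ s ∈ V, ∀ y : ℝ, HasDerivAt (fun s' => U (s', y)) (α s y) s)
    {t x : ℝ} (ht : t ∈ V) :
    HasDerivAt (fun s => deriv (fun y => U (s, y)) x) (deriv (fun y => α t y) x) t := by
  have hUt : ContDiffAt ℝ 2 U (t, x) := hU t ht x
  have hfd : ContDiffAt ℝ 1 (fderiv ℝ U) (t, x) := hUt.fderiv_right (by norm_num)
  have hdiff2 : DifferentiableAt ℝ (fderiv ℝ U) (t, x) := hfd.differentiableAt one_ne_zero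
  set D2 := fderiv ℝ (fderiv ℝ U) (t, x) with hD2
  have hsymm : IsSymmSndFDerivAt ℝ U (t, x) := hUt.isSymmSndFDerivAt (by simp)
  have curveT : ∀ (y s : ℝ), HasDerivAt (fun s' : ℝ => (s', y)) ((1:ℝ), (0:ℝ)) s :=
    fun y s => (hasDerivAt_id s).prodMk (hasDerivAt_const s y)
  have curveX : ∀ (s y : ℝ), HasDerivAt (fun y' : ℝ => (s, y')) ((0:ℝ), (1:ℝ)) y :=
    fun s y => (hasDerivAt_const y s).prodMk (hasDerivAt_id y)
  have hpart : ∀ s ∈ V, ∀ y : ℝ, HasDerivAt (fun y' => U (s, y'))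
      (fderiv ℝ U (s, y) ((0:ℝ), (1:ℝ))) y := by
    intro s hs y
    exact (((hU s hs y).differentiableAt two_ne_zero).hasFDerivAt).comp_hasDerivAt y (curveX s y)
  have claim1 : ∀ s ∈ V, ∀ y : ℝ, deriv (fun y' => U (s, y')) y
      = fderiv ℝ U (s, y) ((0:ℝ), (1:ℝ)) := fun s hs y => (hpart s hs y).deriv
  have hpartT : ∀ s ∈ V, ∀ y : ℝ, HasDerivAt (fun s' => U (s', y))
      (fderiv ℝ U (s, y) ((1:ℝ), (0:ℝ))) s := by
    intro s hs y
    exact (((hU s hs y).differentiableAt two_ne_zero).hasFDerivAt).comp_hasDerivAt s (curveT y s)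
  have claim2 : ∀ s ∈ V, ∀ y : ℝ, fderiv ℝ U (s, y) ((1:ℝ), (0:ℝ)) = α s y :=
    fun s hs y => (hpartT s hs y).unique (hα s hs y)
  have happ : ∀ v : ℝ × ℝ, HasFDerivAt (fun p => fderiv ℝ U p v)
      ((ContinuousLinearMap.apply ℝ ℝ v).comp D2) (t, x) := fun v =>
    (ContinuousLinearMap.apply ℝ ℝ v).hasFDerivAt.comp (t, x) hdiff2.hasFDerivAt
  have e2 : HasDerivAt (fun s => fderiv ℝ U (s, x) ((0:ℝ), (1:ℝ)))
      (D2 ((1:ℝ), (0:ℝ)) ((0:ℝ), (1:ℝ))) t :=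
    by have := (happ ((0:ℝ), (1:ℝ))).comp_hasDerivAt t (curveT x t); exact this
  have e3 : HasDerivAt (fun y => fderiv ℝ U (t, y) ((1:ℝ), (0:ℝ)))
      (D2 ((0:ℝ), (1:ℝ)) ((1:ℝ), (0:ℝ))) x :=
    (happ ((1:ℝ), (0:ℝ))).comp_hasDerivAt x (curveX t x)
  have ev : (fun s => deriv (fun y => U (s, y)) x)
      =ᶠ[𝓝 t] (fun s => fderiv ℝ U (s, x) ((0:ℝ), (1:ℝ))) := by
    filter_upwards [hV.mem_nhds ht] with s hs
    exact claim1 s hs x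
  have main1 : HasDerivAt (fun s => deriv (fun y => U (s, y)) x)
      (D2 ((1:ℝ), (0:ℝ)) ((0:ℝ), (1:ℝ))) t := e2.congr_of_eventuallyEq ev
  have e3' : HasDerivAt (fun y => α t y) (D2 ((0:ℝ), (1:ℝ)) ((1:ℝ), (0:ℝ))) x := by
    refine e3.congr_of_eventuallyEq (Filter.Eventually.of_forall fun y => ?_)
    exact (claim2 t ht y).symm
  have : deriv (fun y => α t y) x = D2 ((0:ℝ), (1:ℝ)) ((1:ℝ), (0:ℝ)) := e3'.deriv
  rw [this, ← hsymm ((1:ℝ), (0:ℝ)) ((0:ℝ), (1:ℝ))]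
  exact main1

lemma schwartz_decay0 (φ : 𝓢(ℝ, ℝ)) (x : ℝ) :
    (1 + x^2) * |φ x| ≤ SchwartzMap.seminorm ℝ 0 0 φ + SchwartzMap.seminorm ℝ 2 0 φ := by
  have h0 : |φ x| ≤ SchwartzMap.seminorm ℝ 0 0 φ := by
    simpa [Real.norm_eq_abs] using SchwartzMap.norm_le_seminorm ℝ φ x
  have h2 : x^2 * |φ x| ≤ SchwartzMap.seminorm ℝ 2 0 φ := by
    have := SchwartzMap.le_seminorm' ℝ 2 0 φ x
    simpa [iteratedDeriv_zero, Real.norm_eq_abs, sq_abs] using this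
  nlinarith [abs_nonneg (φ x)]

lemma schwartz_decay1 (φ : 𝓢(ℝ, ℝ)) (x : ℝ) :
    (1 + x^2) * |deriv φ x| ≤ SchwartzMap.seminorm ℝ 0 1 φ + SchwartzMap.seminorm ℝ 2 1 φ := by
  have h0 : |deriv φ x| ≤ SchwartzMap.seminorm ℝ 0 1 φ := by
    have := SchwartzMap.le_seminorm' ℝ 0 1 φ x
    simpa [iteratedDeriv_one, Real.norm_eq_abs] using this
  have h2 : x^2 * |deriv φ x| ≤ SchwartzMap.seminorm ℝ 2 1 φ := by
    have := SchwartzMap.le_seminorm' ℝ 2 1 φ x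
    simpa [iteratedDeriv_one, Real.norm_eq_abs, sq_abs] using this
  nlinarith [abs_nonneg (deriv φ x)]

lemma schwartz_bound2 (φ : 𝓢(ℝ, ℝ)) (x : ℝ) :
    |deriv (deriv φ) x| ≤ SchwartzMap.seminorm ℝ 0 2 φ := by
  have := SchwartzMap.le_seminorm' ℝ 0 2 φ x
  have h2 : iteratedDeriv 2 φ = deriv (deriv φ) := by
    funext y
    rw [iteratedDeriv_succ, iteratedDeriv_one]
  simpa [h2, Real.norm_eq_abs] using this

lemma schwartz_tendsto_atTop (φ : 𝓢(ℝ, ℝ)) : Tendsto φ atTop (𝓝 0) := by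
  have h : Tendsto φ (cocompact ℝ) (𝓝 0) := by
    have hO := φ.isBigO_cocompact_zpow_neg_nat 1
    have hlim : Tendsto (fun x : ℝ => ‖x‖ ^ (-1 : ℤ)) (cocompact ℝ) (𝓝 0) := by
      have h1 : Tendsto (fun x : ℝ => ‖x‖) (cocompact ℝ) atTop := tendsto_norm_cocompact_atTop
      have h2 : Tendsto (fun r : ℝ => r⁻¹) atTop (𝓝 0) := tendsto_inv_atTop_zero
      simpa [zpow_neg, zpow_one, Function.comp_def] using h2.comp h1
    exact hO.trans_tendsto hlim
  exact h.mono_left (by rw [cocompact_eq_atBot_atTop]; exact le_sup_right)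

lemma schwartz_tendsto_atBot (φ : 𝓢(ℝ, ℝ)) : Tendsto φ atBot (𝓝 0) := by
  have h : Tendsto φ (cocompact ℝ) (𝓝 0) := by
    have hO := φ.isBigO_cocompact_zpow_neg_nat 1
    have hlim : Tendsto (fun x : ℝ => ‖x‖ ^ (-1 : ℤ)) (cocompact ℝ) (𝓝 0) := by
      have h1 : Tendsto (fun x : ℝ => ‖x‖) (cocompact ℝ) atTop := tendsto_norm_cocompact_atTop
      have h2 : Tendsto (fun r : ℝ => r⁻¹) atTop (𝓝 0) := tendsto_inv_atTop_zero
      simpa [zpow_neg, zpow_one, Function.comp_def] using h2.comp h1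
    exact hO.trans_tendsto hlim
  exact h.mono_left (by rw [cocompact_eq_atBot_atTop]; exact le_sup_left)

lemma schwartz_deriv_tendsto_atTop (φ : 𝓢(ℝ, ℝ)) : Tendsto (deriv φ) atTop (𝓝 0) := by
  have := schwartz_tendsto_atTop (SchwartzMap.derivCLM ℝ ℝ φ)
  exact this.congr fun x => SchwartzMap.derivCLM_apply ℝ φ x

lemma schwartz_deriv_tendsto_atBot (φ : 𝓢(ℝ, ℝ)) : Tendsto (deriv φ) atBot (𝓝 0) := by
  have := schwartz_tendsto_atBot (SchwartzMap.derivCLM ℝ ℝ φ)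
  exact this.congr fun x => SchwartzMap.derivCLM_apply ℝ φ x

lemma integrable_of_decay {g : ℝ → ℝ} (hg : Continuous g) (c : ℝ)
    (h : ∀ x, |g x| ≤ c * (1 + x^2)⁻¹) : Integrable g := by
  have hbase : Integrable (fun x : ℝ => c * (1 + x^2)⁻¹) := by
    have : Integrable (fun x : ℝ => (1 + x^2)⁻¹) := integrable_inv_one_add_sq
    exact this.const_mul c
  refine Integrable.mono' hbase hg.aestronglyMeasurable (ae_of_all _ fun x => ?_)
  simpa [Real.norm_eq_abs] using h x

noncomputable def ffun (k : ℝ) (φ : 𝓢(ℝ, ℝ)) : ℝ → ℝ :=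
  fun y => (φ y) ^ 2 + (1 / 2) * (deriv (⇑φ) y) ^ 2 + 2 * k * φ y

noncomputable def afun (k : ℝ) (φ : 𝓢(ℝ, ℝ)) : ℝ → ℝ :=
  fun x => -(φ x * deriv (⇑φ) x + KQ (ffun k φ) x)

noncomputable def bfun (k : ℝ) (φ : 𝓢(ℝ, ℝ)) : ℝ → ℝ :=
  fun x => -((deriv (⇑φ) x) ^ 2 + φ x * deriv (deriv (⇑φ)) x
    + (KConv (ffun k φ) x - ffun k φ x))

noncomputable def hfun (k : ℝ) (φ : 𝓢(ℝ, ℝ)) : ℝ → ℝ :=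
  fun x => (φ x) ^ 3 + φ x * (deriv (⇑φ) x) ^ 2 + 2 * k * (φ x) ^ 2

noncomputable def dhfun (k : ℝ) (φ : 𝓢(ℝ, ℝ)) : ℝ → ℝ :=
  fun x => 3 * (φ x) ^ 2 * afun k φ x + afun k φ x * (deriv (⇑φ) x) ^ 2
    + 2 * φ x * deriv (⇑φ) x * bfun k φ x + 4 * k * φ x * afun k φ x

noncomputable def Gfun (k : ℝ) (φ : 𝓢(ℝ, ℝ)) : ℝ → ℝ :=
  fun x => -((φ x) ^ 4 / 4) - (φ x) ^ 2 * (deriv (⇑φ) x) ^ 2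
    - (φ x) ^ 2 * KConv (ffun k φ) x - (KConv (ffun k φ) x) ^ 2 + (KQ (ffun k φ) x) ^ 2

lemma deriv_coe_eq (φ : 𝓢(ℝ, ℝ)) : ⇑(SchwartzMap.derivCLM ℝ ℝ φ) = deriv (⇑φ) :=
  funext fun x => SchwartzMap.derivCLM_apply ℝ φ x

lemma schwartz_deriv_continuous (φ : 𝓢(ℝ, ℝ)) : Continuous (deriv (⇑φ)) := by
  rw [← deriv_coe_eq]; exact (SchwartzMap.derivCLM ℝ ℝ φ).continuous

lemma schwartz_hasDerivAt (φ : 𝓢(ℝ, ℝ)) (x : ℝ) : HasDerivAt (⇑φ) (deriv (⇑φ) x) x :=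
  (((φ.smooth 1).differentiable one_ne_zero) x).hasDerivAt

lemma schwartz_deriv_hasDerivAt (φ : 𝓢(ℝ, ℝ)) (x : ℝ) :
    HasDerivAt (deriv (⇑φ)) (deriv (deriv (⇑φ)) x) x := by
  have h := schwartz_hasDerivAt (SchwartzMap.derivCLM ℝ ℝ φ) x
  rwa [deriv_coe_eq] at h

lemma ffun_continuous (k : ℝ) (φ : 𝓢(ℝ, ℝ)) : Continuous (ffun k φ) := by
  have h1 : Continuous (⇑φ) := φ.continuous
  have h2 : Continuous (deriv (⇑φ)) := schwartz_deriv_continuous φ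
  unfold ffun; fun_prop

lemma ffun_decay {k B : ℝ} {φ : 𝓢(ℝ, ℝ)} (hB : 0 ≤ B)
    (h1 : ∀ x, |φ x| ≤ B) (h2 : ∀ x, (1 + x ^ 2) * |φ x| ≤ 2 * B)
    (h3 : ∀ x, |deriv (⇑φ) x| ≤ B) (h4 : ∀ x, (1 + x ^ 2) * |deriv (⇑φ) x| ≤ 2 * B) :
    ∀ y, |ffun k φ y| ≤ (3 * B ^ 2 + 4 * |k| * B) * (1 + y ^ 2)⁻¹ := by
  intro y
  have hy : (0:ℝ) < 1 + y ^ 2 := by positivity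
  have d0 : |φ y| ≤ 2 * B * (1 + y ^ 2)⁻¹ := by
    rw [← div_eq_mul_inv, le_div_iff₀ hy]; linarith [h2 y]
  have d1 : |deriv (⇑φ) y| ≤ 2 * B * (1 + y ^ 2)⁻¹ := by
    rw [← div_eq_mul_inv, le_div_iff₀ hy]; linarith [h4 y]
  have e1 : |(φ y) ^ 2| ≤ B * (2 * B * (1 + y ^ 2)⁻¹) := by
    rw [abs_pow, pow_two]
    exact mul_le_mul (h1 y) d0 (abs_nonneg _) hB
  have e2 : |(1/2 : ℝ) * (deriv (⇑φ) y) ^ 2| ≤ (1/2) * (B * (2 * B * (1 + y ^ 2)⁻¹)) := by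
    rw [abs_mul, abs_pow, pow_two, abs_of_pos (by norm_num : (0:ℝ) < 1/2)]
    exact mul_le_mul_of_nonneg_left
      (mul_le_mul (h3 y) d1 (abs_nonneg _) hB) (by norm_num)
  have e3 : |2 * k * φ y| ≤ 2 * |k| * (2 * B * (1 + y ^ 2)⁻¹) := by
    rw [abs_mul, abs_mul, abs_of_pos (by norm_num : (0:ℝ) < 2)]
    exact mul_le_mul_of_nonneg_left d0 (by positivity)
  calc |ffun k φ y| ≤ |(φ y) ^ 2| + |(1/2 : ℝ) * (deriv (⇑φ) y) ^ 2| + |2 * k * φ y| := by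
        unfold ffun
        exact (abs_add_le _ _).trans (by gcongr; exact abs_add_le _ _)
    _ ≤ B * (2 * B * (1 + y ^ 2)⁻¹) + (1/2) * (B * (2 * B * (1 + y ^ 2)⁻¹))
        + 2 * |k| * (2 * B * (1 + y ^ 2)⁻¹) := by linarith
    _ = (3 * B ^ 2 + 4 * |k| * B) * (1 + y ^ 2)⁻¹ := by ring

lemma ffun_integrable (k : ℝ) (φ : 𝓢(ℝ, ℝ)) : Integrable (ffun k φ) := by
  classical
  set B := max (SchwartzMap.seminorm ℝ 0 0 φ + SchwartzMap.seminorm ℝ 2 0 φ)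
    (SchwartzMap.seminorm ℝ 0 1 φ + SchwartzMap.seminorm ℝ 2 1 φ) with hB
  have hB0 : 0 ≤ B := le_trans (by positivity) (le_max_left _ _)
  have h2 : ∀ x, (1 + x ^ 2) * |φ x| ≤ 2 * B := fun x =>
    (schwartz_decay0 φ x).trans (by
      have := le_max_left (SchwartzMap.seminorm ℝ 0 0 φ + SchwartzMap.seminorm ℝ 2 0 φ)
        (SchwartzMap.seminorm ℝ 0 1 φ + SchwartzMap.seminorm ℝ 2 1 φ)
      linarith)
  have h4 : ∀ x, (1 + x ^ 2) * |deriv (⇑φ) x| ≤ 2 * B := fun x =>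
    (schwartz_decay1 φ x).trans (by
      have := le_max_right (SchwartzMap.seminorm ℝ 0 0 φ + SchwartzMap.seminorm ℝ 2 0 φ)
        (SchwartzMap.seminorm ℝ 0 1 φ + SchwartzMap.seminorm ℝ 2 1 φ)
      linarith)
  have h1 : ∀ x, |φ x| ≤ B := fun x => by
    have h := SchwartzMap.norm_le_seminorm ℝ φ x
    rw [Real.norm_eq_abs] at h
    have h20 := apply_nonneg (SchwartzMap.seminorm ℝ (E := ℝ) (F := ℝ) 2 0) φ
    have := le_max_left (SchwartzMap.seminorm ℝ 0 0 φ + SchwartzMap.seminorm ℝ 2 0 φ)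
      (SchwartzMap.seminorm ℝ 0 1 φ + SchwartzMap.seminorm ℝ 2 1 φ)
    linarith
  have h3 : ∀ x, |deriv (⇑φ) x| ≤ B := fun x => by
    have h := SchwartzMap.le_seminorm' ℝ 0 1 φ x
    simp only [iteratedDeriv_one, Real.norm_eq_abs, pow_zero, one_mul] at h
    have h21 := apply_nonneg (SchwartzMap.seminorm ℝ (E := ℝ) (F := ℝ) 2 1) φ
    have := le_max_right (SchwartzMap.seminorm ℝ 0 0 φ + SchwartzMap.seminorm ℝ 2 0 φ)
      (SchwartzMap.seminorm ℝ 0 1 φ + SchwartzMap.seminorm ℝ 2 1 φ)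
    linarith
  exact integrable_of_decay (ffun_continuous k φ) _ (ffun_decay hB0 h1 h2 h3 h4)

lemma KConv_continuous {f : ℝ → ℝ} (hc : Continuous f) (hi : Integrable f) :
    Continuous (KConv f) :=
  continuous_iff_continuousAt.2 fun x => (hasDerivAt_KConv hc hi x).continuousAt

lemma hasDerivAt_afun (k : ℝ) (φ : 𝓢(ℝ, ℝ)) (x : ℝ) :
    HasDerivAt (afun k φ) (bfun k φ x) x := by
  have hc := ffun_continuous k φ
  have hi := ffun_integrable k φ
  have h := ((schwartz_hasDerivAt φ x).mul (schwartz_deriv_hasDerivAt φ x)).add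
    (hasDerivAt_KQ hc hi x)
  have h2 := h.neg
  refine h2.congr_deriv ?_
  unfold bfun; ring

lemma afun_continuous (k : ℝ) (φ : 𝓢(ℝ, ℝ)) : Continuous (afun k φ) :=
  continuous_iff_continuousAt.2 fun x => (hasDerivAt_afun k φ x).continuousAt

lemma bfun_continuous (k : ℝ) (φ : 𝓢(ℝ, ℝ)) : Continuous (bfun k φ) := by
  have hc := ffun_continuous k φ
  have hi := ffun_integrable k φ
  have h1 : Continuous (⇑φ) := φ.continuous
  have h2 : Continuous (deriv (⇑φ)) := schwartz_deriv_continuous φ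
  have h3 : Continuous (deriv (deriv (⇑φ))) := by
    have := schwartz_deriv_continuous (SchwartzMap.derivCLM ℝ ℝ φ)
    rwa [deriv_coe_eq] at this
  have h4 := KConv_continuous hc hi
  unfold bfun
  fun_prop

lemma hasDerivAt_Gfun (k : ℝ) (φ : 𝓢(ℝ, ℝ)) (x : ℝ) :
    HasDerivAt (Gfun k φ) (dhfun k φ x) x := by
  have hc := ffun_continuous k φ
  have hi := ffun_integrable k φ
  have hφ := schwartz_hasDerivAt φ x
  have hw := schwartz_deriv_hasDerivAt φ x
  have hP := hasDerivAt_KConv hc hi x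
  have hQ := hasDerivAt_KQ hc hi x
  have h := (((((hφ.pow 4).div_const 4).neg.sub ((hφ.pow 2).mul (hw.pow 2))).sub
    ((hφ.pow 2).mul hP)).sub (hP.pow 2)).add (hQ.pow 2)
  refine h.congr_deriv ?_
  simp only [Pi.pow_apply]
  unfold dhfun afun bfun ffun
  push_cast
  ring

lemma tendsto_Gfun_atTop (k : ℝ) (φ : 𝓢(ℝ, ℝ)) : Tendsto (Gfun k φ) atTop (𝓝 0) := by
  have hc := ffun_continuous k φ
  have hi := ffun_integrable k φ
  have hφ := schwartz_tendsto_atTop φ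
  have hw := schwartz_deriv_tendsto_atTop φ
  have hP := tendsto_KConv_atTop hc hi
  have hQ := tendsto_KQ_atTop hc hi
  have h := (((((hφ.pow 4).div_const 4).neg.sub ((hφ.pow 2).mul (hw.pow 2))).sub
    ((hφ.pow 2).mul hP)).sub (hP.pow 2)).add (hQ.pow 2)
  unfold Gfun; simpa using h

lemma tendsto_Gfun_atBot (k : ℝ) (φ : 𝓢(ℝ, ℝ)) : Tendsto (Gfun k φ) atBot (𝓝 0) := by
  have hc := ffun_continuous k φ
  have hi := ffun_integrable k φ
  have hφ := schwartz_tendsto_atBot φ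
  have hw := schwartz_deriv_tendsto_atBot φ
  have hP := tendsto_KConv_atBot hc hi
  have hQ := tendsto_KQ_atBot hc hi
  have h := (((((hφ.pow 4).div_const 4).neg.sub ((hφ.pow 2).mul (hw.pow 2))).sub
    ((hφ.pow 2).mul hP)).sub (hP.pow 2)).add (hQ.pow 2)
  unfold Gfun; simpa using h

section Bounds

variable {k B : ℝ} {φ : 𝓢(ℝ, ℝ)}

lemma Mf_le (hB : 0 ≤ B)
    (h1 : ∀ x, |φ x| ≤ B) (h2 : ∀ x, (1 + x ^ 2) * |φ x| ≤ 2 * B)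
    (h3 : ∀ x, |deriv (⇑φ) x| ≤ B) (h4 : ∀ x, (1 + x ^ 2) * |deriv (⇑φ) x| ≤ 2 * B) :
    ∫ y, ‖ffun k φ y‖ ≤ 4 * (3 * B ^ 2 + 4 * |k| * B) := by
  have c1nn : (0:ℝ) ≤ 3 * B ^ 2 + 4 * |k| * B := by positivity
  have step : ∫ y, ‖ffun k φ y‖
      ≤ ∫ y : ℝ, (3 * B ^ 2 + 4 * |k| * B) * (1 + y ^ 2)⁻¹ := by
    refine integral_mono (ffun_integrable k φ).norm
      (integrable_inv_one_add_sq.const_mul _) fun y => ?_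
    simpa [Real.norm_eq_abs] using ffun_decay hB h1 h2 h3 h4 y
  have step2 : ∫ y : ℝ, (3 * B ^ 2 + 4 * |k| * B) * (1 + y ^ 2)⁻¹
      = (3 * B ^ 2 + 4 * |k| * B) * π := by
    rw [integral_const_mul, integral_univ_inv_one_add_sq]
  have := Real.pi_le_four
  nlinarith [Real.pi_pos]

lemma KConv_abs_le_cM (hB : 0 ≤ B)
    (h1 : ∀ x, |φ x| ≤ B) (h2 : ∀ x, (1 + x ^ 2) * |φ x| ≤ 2 * B)
    (h3 : ∀ x, |deriv (⇑φ) x| ≤ B) (h4 : ∀ x, (1 + x ^ 2) * |deriv (⇑φ) x| ≤ 2 * B) (x : ℝ) :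
    |KConv (ffun k φ) x| ≤ 4 * (3 * B ^ 2 + 4 * |k| * B) :=
  (abs_KConv_le (ffun_continuous k φ) (ffun_integrable k φ) x).trans (Mf_le hB h1 h2 h3 h4)

lemma KQ_abs_le_cM (hB : 0 ≤ B)
    (h1 : ∀ x, |φ x| ≤ B) (h2 : ∀ x, (1 + x ^ 2) * |φ x| ≤ 2 * B)
    (h3 : ∀ x, |deriv (⇑φ) x| ≤ B) (h4 : ∀ x, (1 + x ^ 2) * |deriv (⇑φ) x| ≤ 2 * B) (x : ℝ) :
    |KQ (ffun k φ) x| ≤ 4 * (3 * B ^ 2 + 4 * |k| * B) :=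
  (abs_KQ_le (ffun_continuous k φ) (ffun_integrable k φ) x).trans (Mf_le hB h1 h2 h3 h4)

lemma abs_pair {p q P Q : ℝ} (hp : |p| ≤ P) (hq : |q| ≤ Q) : |p * q| ≤ P * Q := by
  have h0P : 0 ≤ P := (abs_nonneg p).trans hp
  rw [abs_mul]
  exact mul_le_mul hp hq (abs_nonneg _) h0P

lemma abs_triple {p q r P Q R : ℝ} (hp : |p| ≤ P) (hq : |q| ≤ Q) (hr : |r| ≤ R) :
    |p * q * r| ≤ P * Q * R := by
  have h0P : 0 ≤ P := (abs_nonneg p).trans hp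
  have h0Q : 0 ≤ Q := (abs_nonneg q).trans hq
  rw [abs_mul, abs_mul]
  exact mul_le_mul (mul_le_mul hp hq (abs_nonneg _) h0P) hr (abs_nonneg _)
    (mul_nonneg h0P h0Q)

lemma hfun_bound (hB : 0 ≤ B)
    (h1 : ∀ x, |φ x| ≤ B) (h2 : ∀ x, (1 + x ^ 2) * |φ x| ≤ 2 * B)
    (h3 : ∀ x, |deriv (⇑φ) x| ≤ B) (x : ℝ) :
    |hfun k φ x| ≤ (2 * B * (2 * B ^ 2 + 2 * |k| * B)) * (1 + x ^ 2)⁻¹ := by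
  have hy : (0:ℝ) < 1 + x ^ 2 := by positivity
  have d0 : |φ x| ≤ 2 * B * (1 + x ^ 2)⁻¹ := by
    rw [← div_eq_mul_inv, le_div_iff₀ hy]; linarith [h2 x]
  have t1 : |(φ x) ^ 3| ≤ (2 * B * (1 + x ^ 2)⁻¹) * B * B := by
    rw [show (φ x) ^ 3 = φ x * φ x * φ x by ring]
    exact abs_triple d0 (h1 x) (h1 x)
  have t2 : |φ x * (deriv (⇑φ) x) ^ 2| ≤ (2 * B * (1 + x ^ 2)⁻¹) * B * B := by
    rw [show φ x * (deriv (⇑φ) x) ^ 2 = φ x * deriv (⇑φ) x * deriv (⇑φ) x by ring]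
    exact abs_triple d0 (h3 x) (h3 x)
  have t3 : |2 * k * (φ x) ^ 2| ≤ (2 * |k| * B) * (2 * B * (1 + x ^ 2)⁻¹) := by
    rw [show 2 * k * (φ x) ^ 2 = (2 * k * φ x) * φ x by ring]
    refine abs_pair ?_ d0
    rw [abs_mul, abs_mul, abs_of_pos (by norm_num : (0:ℝ) < 2)]
    exact mul_le_mul_of_nonneg_left (h1 x) (by positivity)
  calc |hfun k φ x| ≤ |(φ x) ^ 3| + |φ x * (deriv (⇑φ) x) ^ 2| + |2 * k * (φ x) ^ 2| := by
        unfold hfun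
        exact (abs_add_le _ _).trans (by gcongr; exact abs_add_le _ _)
    _ ≤ (2 * B * (1 + x ^ 2)⁻¹) * B * B + (2 * B * (1 + x ^ 2)⁻¹) * B * B
        + (2 * |k| * B) * (2 * B * (1 + x ^ 2)⁻¹) := by linarith
    _ = (2 * B * (2 * B ^ 2 + 2 * |k| * B)) * (1 + x ^ 2)⁻¹ := by ring

lemma afun_abs_le (hB : 0 ≤ B)
    (h1 : ∀ x, |φ x| ≤ B) (h2 : ∀ x, (1 + x ^ 2) * |φ x| ≤ 2 * B)
    (h3 : ∀ x, |deriv (⇑φ) x| ≤ B) (h4 : ∀ x, (1 + x ^ 2) * |deriv (⇑φ) x| ≤ 2 * B) (x : ℝ) :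
    |afun k φ x| ≤ B ^ 2 + 4 * (3 * B ^ 2 + 4 * |k| * B) := by
  have hQ := KQ_abs_le_cM (k := k) hB h1 h2 h3 h4 x
  have hm : |φ x * deriv (⇑φ) x| ≤ B * B := abs_pair (h1 x) (h3 x)
  have : |afun k φ x| ≤ |φ x * deriv (⇑φ) x| + |KQ (ffun k φ) x| := by
    unfold afun; rw [abs_neg]; exact abs_add_le _ _
  nlinarith

lemma bfun_abs_le (hB : 0 ≤ B)
    (h1 : ∀ x, |φ x| ≤ B) (h2 : ∀ x, (1 + x ^ 2) * |φ x| ≤ 2 * B)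
    (h3 : ∀ x, |deriv (⇑φ) x| ≤ B) (h4 : ∀ x, (1 + x ^ 2) * |deriv (⇑φ) x| ≤ 2 * B)
    (h5 : ∀ x, |deriv (deriv (⇑φ)) x| ≤ B) (x : ℝ) :
    |bfun k φ x| ≤ 2 * B ^ 2 + 4 * (3 * B ^ 2 + 4 * |k| * B) + (3 * B ^ 2 + 4 * |k| * B) := by
  have hP := KConv_abs_le_cM (k := k) hB h1 h2 h3 h4 x
  have hf : |ffun k φ x| ≤ 3 * B ^ 2 + 4 * |k| * B := by
    have hd := ffun_decay (k := k) hB h1 h2 h3 h4 x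
    have hx : (0:ℝ) < 1 + x ^ 2 := by positivity
    have hinv : (1 + x ^ 2)⁻¹ ≤ 1 := by
      rw [inv_le_one_iff₀]; right; nlinarith
    have := mul_le_mul_of_nonneg_left hinv
      (show (0:ℝ) ≤ 3 * B ^ 2 + 4 * |k| * B by positivity)
    linarith
  have htri : |bfun k φ x| ≤ |(deriv (⇑φ) x) ^ 2| + |φ x * deriv (deriv (⇑φ)) x|
      + (|KConv (ffun k φ) x| + |ffun k φ x|) := by
    unfold bfun; rw [abs_neg]
    refine (abs_add_le _ _).trans ?_
    gcongr
    · exact abs_add_le _ _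
    · exact abs_sub _ _
  have e1 : |(deriv (⇑φ) x) ^ 2| ≤ B * B := by
    rw [show (deriv (⇑φ) x) ^ 2 = deriv (⇑φ) x * deriv (⇑φ) x by ring]
    exact abs_pair (h3 x) (h3 x)
  have e2 : |φ x * deriv (deriv (⇑φ)) x| ≤ B * B := abs_pair (h1 x) (h5 x)
  nlinarith

lemma dhfun_bound (hB : 0 ≤ B)
    (h1 : ∀ x, |φ x| ≤ B) (h2 : ∀ x, (1 + x ^ 2) * |φ x| ≤ 2 * B)
    (h3 : ∀ x, |deriv (⇑φ) x| ≤ B) (h4 : ∀ x, (1 + x ^ 2) * |deriv (⇑φ) x| ≤ 2 * B)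
    (h5 : ∀ x, |deriv (deriv (⇑φ)) x| ≤ B) (x : ℝ) :
    |dhfun k φ x| ≤ (2 * B * ((3 * B + 4 * |k|) * (B ^ 2 + 4 * (3 * B ^ 2 + 4 * |k| * B))
        + B * (B ^ 2 + 4 * (3 * B ^ 2 + 4 * |k| * B))
        + 2 * B * (2 * B ^ 2 + 4 * (3 * B ^ 2 + 4 * |k| * B) + (3 * B ^ 2 + 4 * |k| * B))))
      * (1 + x ^ 2)⁻¹ := by
  set cA := B ^ 2 + 4 * (3 * B ^ 2 + 4 * |k| * B) with hcA
  set cB := 2 * B ^ 2 + 4 * (3 * B ^ 2 + 4 * |k| * B) + (3 * B ^ 2 + 4 * |k| * B) with hcB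
  have hy : (0:ℝ) < 1 + x ^ 2 := by positivity
  have d0 : |φ x| ≤ 2 * B * (1 + x ^ 2)⁻¹ := by
    rw [← div_eq_mul_inv, le_div_iff₀ hy]; linarith [h2 x]
  have d1 : |deriv (⇑φ) x| ≤ 2 * B * (1 + x ^ 2)⁻¹ := by
    rw [← div_eq_mul_inv, le_div_iff₀ hy]; linarith [h4 x]
  have ha := afun_abs_le (k := k) hB h1 h2 h3 h4 x
  have hb := bfun_abs_le (k := k) hB h1 h2 h3 h4 h5 x
  rw [← hcA] at ha
  rw [← hcB] at hb
  have t1 : |3 * (φ x) ^ 2 * afun k φ x|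
      ≤ (3 * B) * (2 * B * (1 + x ^ 2)⁻¹) * cA := by
    rw [show 3 * (φ x) ^ 2 * afun k φ x = (3 * φ x) * φ x * afun k φ x by ring]
    refine abs_triple ?_ d0 ha
    rw [abs_mul, abs_of_pos (by norm_num : (0:ℝ) < 3)]
    exact mul_le_mul_of_nonneg_left (h1 x) (by norm_num)
  have t2 : |afun k φ x * (deriv (⇑φ) x) ^ 2|
      ≤ cA * B * (2 * B * (1 + x ^ 2)⁻¹) := by
    rw [show afun k φ x * (deriv (⇑φ) x) ^ 2
      = afun k φ x * deriv (⇑φ) x * deriv (⇑φ) x by ring]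
    exact abs_triple ha (h3 x) d1
  have t3 : |2 * φ x * deriv (⇑φ) x * bfun k φ x|
      ≤ (2 * (2 * B * (1 + x ^ 2)⁻¹)) * B * cB := by
    rw [show 2 * φ x * deriv (⇑φ) x * bfun k φ x
      = (2 * φ x) * deriv (⇑φ) x * bfun k φ x by ring]
    refine abs_triple ?_ (h3 x) hb
    rw [abs_mul, abs_of_pos (by norm_num : (0:ℝ) < 2)]
    exact mul_le_mul_of_nonneg_left d0 (by norm_num)
  have t4 : |4 * k * φ x * afun k φ x|
      ≤ (4 * |k|) * (2 * B * (1 + x ^ 2)⁻¹) * cA := by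
    refine abs_triple ?_ d0 ha
    rw [abs_mul, abs_of_pos (by norm_num : (0:ℝ) < 4)]
  have htri : |dhfun k φ x| ≤ |3 * (φ x) ^ 2 * afun k φ x| + |afun k φ x * (deriv (⇑φ) x) ^ 2|
      + |2 * φ x * deriv (⇑φ) x * bfun k φ x| + |4 * k * φ x * afun k φ x| := by
    unfold dhfun
    exact (abs_add_le _ _).trans (by gcongr; exact (abs_add_le _ _).trans (by gcongr; exact abs_add_le _ _))
  calc |dhfun k φ x| ≤ (3 * B) * (2 * B * (1 + x ^ 2)⁻¹) * cA + cA * B * (2 * B * (1 + x ^ 2)⁻¹)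
      + (2 * (2 * B * (1 + x ^ 2)⁻¹)) * B * cB + (4 * |k|) * (2 * B * (1 + x ^ 2)⁻¹) * cA := by
        linarith
    _ = (2 * B * ((3 * B + 4 * |k|) * cA + B * cA + 2 * B * cB)) * (1 + x ^ 2)⁻¹ := by ring

end Bounds

lemma bounds_of_seminorm_le {φ : 𝓢(ℝ, ℝ)} {B : ℝ}
    (h00 : SchwartzMap.seminorm ℝ 0 0 φ ≤ B) (h20 : SchwartzMap.seminorm ℝ 2 0 φ ≤ B)
    (h01 : SchwartzMap.seminorm ℝ 0 1 φ ≤ B) (h21 : SchwartzMap.seminorm ℝ 2 1 φ ≤ B)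
    (h02 : SchwartzMap.seminorm ℝ 0 2 φ ≤ B) :
    (∀ x, |φ x| ≤ B) ∧ (∀ x, (1 + x ^ 2) * |φ x| ≤ 2 * B)
      ∧ (∀ x, |deriv (⇑φ) x| ≤ B) ∧ (∀ x, (1 + x ^ 2) * |deriv (⇑φ) x| ≤ 2 * B)
      ∧ (∀ x, |deriv (deriv (⇑φ)) x| ≤ B) := by
  refine ⟨fun x => ?_, fun x => ?_, fun x => ?_, fun x => ?_, fun x => ?_⟩
  · have h := SchwartzMap.norm_le_seminorm ℝ φ x
    rw [Real.norm_eq_abs] at h; linarith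
  · have := schwartz_decay0 φ x; linarith
  · have h := SchwartzMap.le_seminorm' ℝ 0 1 φ x
    simp only [iteratedDeriv_one, Real.norm_eq_abs, pow_zero, one_mul] at h
    linarith
  · have := schwartz_decay1 φ x; linarith
  · have := schwartz_bound2 φ x; linarith

lemma self_bounds (φ : 𝓢(ℝ, ℝ)) : ∃ B : ℝ, 0 ≤ B
    ∧ (∀ x, |φ x| ≤ B) ∧ (∀ x, (1 + x ^ 2) * |φ x| ≤ 2 * B)
    ∧ (∀ x, |deriv (⇑φ) x| ≤ B) ∧ (∀ x, (1 + x ^ 2) * |deriv (⇑φ) x| ≤ 2 * B)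
    ∧ (∀ x, |deriv (deriv (⇑φ)) x| ≤ B) := by
  set B := max (max (SchwartzMap.seminorm ℝ 0 0 φ) (SchwartzMap.seminorm ℝ 2 0 φ))
    (max (max (SchwartzMap.seminorm ℝ 0 1 φ) (SchwartzMap.seminorm ℝ 2 1 φ))
      (SchwartzMap.seminorm ℝ 0 2 φ)) with hB
  have h0 : 0 ≤ B := le_trans (apply_nonneg _ _)
    ((le_max_left _ _).trans (le_max_left _ _))
  refine ⟨B, h0, bounds_of_seminorm_le ?_ ?_ ?_ ?_ ?_⟩
  · exact (le_max_left _ _).trans (le_max_left _ _)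
  · exact (le_max_right _ _).trans (le_max_left _ _)
  · exact ((le_max_left _ _).trans (le_max_left _ _)).trans (le_max_right _ _)
  · exact ((le_max_right _ _).trans (le_max_left _ _)).trans (le_max_right _ _)
  · exact (le_max_right _ _).trans (le_max_right _ _)

lemma hfun_continuous (k : ℝ) (φ : 𝓢(ℝ, ℝ)) : Continuous (hfun k φ) := by
  have h1 : Continuous (⇑φ) := φ.continuous
  have h2 : Continuous (deriv (⇑φ)) := schwartz_deriv_continuous φ
  unfold hfun; fun_prop

lemma dhfun_continuous (k : ℝ) (φ : 𝓢(ℝ, ℝ)) : Continuous (dhfun k φ) := by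
  have h1 : Continuous (⇑φ) := φ.continuous
  have h2 : Continuous (deriv (⇑φ)) := schwartz_deriv_continuous φ
  have h3 := afun_continuous k φ
  have h4 := bfun_continuous k φ
  unfold dhfun; fun_prop

lemma hfun_integrable (k : ℝ) (φ : 𝓢(ℝ, ℝ)) : Integrable (hfun k φ) := by
  obtain ⟨B, hB0, h1, h2, h3, h4, h5⟩ := self_bounds φ
  exact integrable_of_decay (hfun_continuous k φ) _ (hfun_bound hB0 h1 h2 h3)

lemma dhfun_integrable (k : ℝ) (φ : 𝓢(ℝ, ℝ)) : Integrable (dhfun k φ) := by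
  obtain ⟨B, hB0, h1, h2, h3, h4, h5⟩ := self_bounds φ
  exact integrable_of_decay (dhfun_continuous k φ) _ (dhfun_bound hB0 h1 h2 h3 h4 h5)

lemma integral_dhfun_eq_zero (k : ℝ) (φ : 𝓢(ℝ, ℝ)) : ∫ x, dhfun k φ x = 0 := by
  have h := integral_of_hasDerivAt_of_tendsto (f := Gfun k φ) (f' := dhfun k φ)
    (hasDerivAt_Gfun k φ) (dhfun_integrable k φ)
    (tendsto_Gfun_atBot k φ) (tendsto_Gfun_atTop k φ)
  simpa using h

/-- The Camassa–Holm Hamiltonian `H₂(u) = (1/2) ∫ (u³ + u (u')² + 2k u²)`. -/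
noncomputable def H2CH (k : ℝ) (u : ℝ → ℝ) : ℝ :=
  (1 / 2) * ∫ x : ℝ, ((u x) ^ 3 + u x * (deriv u x) ^ 2 + 2 * k * (u x) ^ 2)

/-- Let `k ≥ 0`, `T > 0`, and let `u : [0,T] × ℝ → ℝ` be smooth, with
`t ↦ u(t,·)` a C¹ map into Schwartz space (encoded by continuity of the Schwartz-valued curve,
joint smoothness, and pointwise time differentiability), solving the Camassa–Holm equation in
nonlocal form `∂_t u + u ∂_x u + ∂_x P = 0`, where
`P(t,·) = K * (u(t,·)² + (1/2)(∂_x u(t,·))² + 2k u(t,·))` and `K(x) = (1/2) e^{−|x|}`.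
Then `H₂(u(t,·))` is constant in `t` on `[0,T]`. -/
theorem stmt8 (k : ℝ) (hk : 0 ≤ k) (T : ℝ) (hT : 0 < T)
    (u : ℝ → 𝓢(ℝ, ℝ))
    (hsmooth : ContDiffOn ℝ (⊤ : ℕ∞) (fun p : ℝ × ℝ => u p.1 p.2) (Set.Icc 0 T ×ˢ Set.univ))
    (hcont : Continuous u)
    (hPDE : ∀ t ∈ Set.Icc (0 : ℝ) T, ∀ x : ℝ,
      HasDerivWithinAt (fun s => u s x)
        (-(u t x * deriv (⇑(u t)) x
            + deriv (KConv (fun y => (u t y) ^ 2 + (1 / 2) * (deriv (⇑(u t)) y) ^ 2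
                + 2 * k * u t y)) x))
        (Set.Icc 0 T) t) :
    ∀ t ∈ Set.Icc (0 : ℝ) T, H2CH k (⇑(u t)) = H2CH k (⇑(u 0)) := by
  classical
  set H : ℝ → ℝ := fun s => ∫ x, hfun k (u s) x with hHdef
  have hsem : ∀ i j : ℕ, ∃ C : ℝ, ∀ s ∈ Set.Icc (0:ℝ) T,
      SchwartzMap.seminorm ℝ i j (u s) ≤ C := by
    intro i j
    have hctsSem : Continuous fun s => SchwartzMap.seminorm ℝ i j (u s) :=
      ((schwartz_withSeminorms ℝ ℝ ℝ).continuous_seminorm (i, j)).comp hcont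
    obtain ⟨C, hC⟩ := (isCompact_Icc.image hctsSem).bddAbove
    exact ⟨C, fun s hs => hC ⟨s, hs, rfl⟩⟩
  obtain ⟨C00, h00⟩ := hsem 0 0
  obtain ⟨C20, h20⟩ := hsem 2 0
  obtain ⟨C01, h01⟩ := hsem 0 1
  obtain ⟨C21, h21⟩ := hsem 2 1
  obtain ⟨C02, h02⟩ := hsem 0 2
  set B : ℝ := max (max C00 C20) (max (max C01 C21) C02) with hBdef
  have hB0 : 0 ≤ B := by
    have h1 := h00 0 (Set.left_mem_Icc.2 hT.le)
    have h2 := apply_nonneg (SchwartzMap.seminorm ℝ (E := ℝ) (F := ℝ) 0 0) (u 0)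
    have h : C00 ≤ B := (le_max_left _ _).trans (le_max_left _ _)
    linarith
  have hpack : ∀ s ∈ Set.Icc (0:ℝ) T,
      (∀ x, |u s x| ≤ B) ∧ (∀ x, (1 + x ^ 2) * |u s x| ≤ 2 * B)
      ∧ (∀ x, |deriv (⇑(u s)) x| ≤ B) ∧ (∀ x, (1 + x ^ 2) * |deriv (⇑(u s)) x| ≤ 2 * B)
      ∧ (∀ x, |deriv (deriv (⇑(u s))) x| ≤ B) := by
    intro s hs
    refine bounds_of_seminorm_le ?_ ?_ ?_ ?_ ?_
    · exact (h00 s hs).trans ((le_max_left _ _).trans (le_max_left _ _))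
    · exact (h20 s hs).trans ((le_max_right _ _).trans (le_max_left _ _))
    · exact (h01 s hs).trans
        (((le_max_left _ _).trans (le_max_left _ _)).trans (le_max_right _ _))
    · exact (h21 s hs).trans
        (((le_max_right _ _).trans (le_max_left _ _)).trans (le_max_right _ _))
    · exact (h02 s hs).trans ((le_max_right _ _).trans (le_max_right _ _))
  have hPDE' : ∀ s ∈ Set.Icc (0:ℝ) T, ∀ x : ℝ,
      HasDerivWithinAt (fun r => u r x) (afun k (u s) x) (Set.Icc 0 T) s := by
    intro s hs x
    have h2 : KQ (ffun k (u s)) x = deriv (KConv (ffun k (u s))) x := by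
      rw [deriv_KConv (ffun_continuous k (u s)) (ffun_integrable k (u s))]
    show HasDerivWithinAt (fun r => u r x)
      (-(u s x * deriv (⇑(u s)) x + KQ (ffun k (u s)) x)) (Set.Icc 0 T) s
    rw [h2]
    exact hPDE s hs x
  set V : Set ℝ := Set.Ioo 0 T with hVdef
  have hVIcc : V ⊆ Set.Icc 0 T := Set.Ioo_subset_Icc_self
  have hat : ∀ s ∈ V, ∀ x : ℝ, HasDerivAt (fun r => u r x) (afun k (u s) x) s :=
    fun s hs x => (hPDE' s (hVIcc hs) x).hasDerivAt (Icc_mem_nhds hs.1 hs.2)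
  have hU2 : ∀ s ∈ V, ∀ y : ℝ, ContDiffAt ℝ 2 (fun p : ℝ × ℝ => u p.1 p.2) (s, y) := by
    intro s hs y
    refine (hsmooth.contDiffAt ?_).of_le (by exact WithTop.coe_le_coe.2 (le_top : (2:ℕ∞) ≤ ⊤))
    exact prod_mem_nhds (Icc_mem_nhds hs.1 hs.2) Filter.univ_mem
  have hwt : ∀ s ∈ V, ∀ x : ℝ,
      HasDerivAt (fun r => deriv (⇑(u r)) x) (bfun k (u s) x) s := by
    intro s hs x
    have hmp := mixed_partial (isOpen_Ioo (a := (0:ℝ)) (b := T)) hU2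
      (α := fun r y => afun k (u r) y) hat hs (x := x)
    have hd : deriv (fun y => afun k (u s) y) x = bfun k (u s) x :=
      (hasDerivAt_afun k (u s) x).deriv
    rw [hd] at hmp
    exact hmp
  have hderivH : ∀ s ∈ V, HasDerivAt H 0 s := by
    intro s hs
    have hε : 0 < min s (T - s) := lt_min hs.1 (by linarith [hs.2])
    have hball : Metric.ball s (min s (T - s)) ⊆ V := by
      intro r hr
      rw [Metric.mem_ball, Real.dist_eq, abs_lt] at hr
      constructor
      · have h1 := hr.1; have h2 := min_le_left s (T - s); linarith
      · have h1 := hr.2; have h2 := min_le_right s (T - s); linarith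
    have hbd : ∀ᵐ x : ℝ, ∀ r ∈ Metric.ball s (min s (T - s)),
        ‖dhfun k (u r) x‖ ≤ (2 * B * ((3 * B + 4 * |k|) * (B ^ 2 + 4 * (3 * B ^ 2 + 4 * |k| * B))
          + B * (B ^ 2 + 4 * (3 * B ^ 2 + 4 * |k| * B))
          + 2 * B * (2 * B ^ 2 + 4 * (3 * B ^ 2 + 4 * |k| * B) + (3 * B ^ 2 + 4 * |k| * B))))
          * (1 + x ^ 2)⁻¹ := by
      refine ae_of_all _ fun x r hr => ?_
      obtain ⟨b1, b2, b3, b4, b5⟩ := hpack r (hVIcc (hball hr))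
      simpa [Real.norm_eq_abs] using dhfun_bound hB0 b1 b2 b3 b4 b5 x
    have hdiff : ∀ᵐ x : ℝ, ∀ r ∈ Metric.ball s (min s (T - s)),
        HasDerivAt (fun r' => hfun k (u r') x) (dhfun k (u r) x) r := by
      refine ae_of_all _ fun x r hr => ?_
      have h1 := hat r (hball hr) x
      have h2 := hwt r (hball hr) x
      have hcomb := ((h1.pow 3).add (h1.mul (h2.pow 2))).add ((h1.pow 2).const_mul (2 * k))
      refine hcomb.congr_deriv ?_
      simp only [Pi.pow_apply]
      unfold dhfun
      push_cast
      ring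
    have key := hasDerivAt_integral_of_dominated_loc_of_deriv_le (μ := volume)
      (F := fun r x => hfun k (u r) x) (F' := fun r x => dhfun k (u r) x) (Metric.ball_mem_nhds s hε)
      (Filter.Eventually.of_forall fun r => (hfun_continuous k (u r)).aestronglyMeasurable)
      (hfun_integrable k (u s))
      ((dhfun_continuous k (u s)).aestronglyMeasurable)
      hbd
      (integrable_inv_one_add_sq.const_mul _)
      hdiff
    have hfin := key.2
    rw [integral_dhfun_eq_zero k (u s)] at hfin
    exact hfin
  have hconstV : ∀ s1 ∈ V, ∀ s2 ∈ V, H s1 = H s2 := by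
    have key : ∀ s1 s2, s1 ∈ V → s2 ∈ V → s1 ≤ s2 → H s2 = H s1 := by
      intro s1 s2 hs1 hs2 h12
      have hsub : Set.Icc s1 s2 ⊆ V := fun r hr =>
        ⟨lt_of_lt_of_le hs1.1 hr.1, lt_of_le_of_lt hr.2 hs2.2⟩
      have := constant_of_has_deriv_right_zero (f := H) (a := s1) (b := s2)
        (fun r hr => ((hderivH r (hsub hr)).continuousAt.continuousWithinAt))
        (fun r hr => (hderivH r (hsub (Set.mem_Icc.2 ⟨hr.1, hr.2.le⟩))).hasDerivWithinAt)
      exact this s2 (Set.right_mem_Icc.2 h12)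
    intro s1 hs1 s2 hs2
    rcases le_total s1 s2 with h | h
    · exact (key s1 s2 hs1 hs2 h).symm
    · exact key s2 s1 hs2 hs1 h
  have HcontIcc : ContinuousOn H (Set.Icc 0 T) := by
    intro s hs
    refine continuousWithinAt_of_dominated
      (bound := fun x => (2 * B * (2 * B ^ 2 + 2 * |k| * B)) * (1 + x ^ 2)⁻¹)
      (Filter.Eventually.of_forall fun r => (hfun_continuous k (u r)).aestronglyMeasurable)
      ?_ (integrable_inv_one_add_sq.const_mul _) (ae_of_all _ fun x => ?_)
    · filter_upwards [self_mem_nhdsWithin] with r hr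
      refine ae_of_all _ fun x => ?_
      obtain ⟨b1, b2, b3, b4, b5⟩ := hpack r hr
      simpa [Real.norm_eq_abs] using hfun_bound hB0 b1 b2 b3 x
    · have hc1 : Continuous fun r => u r x :=
        ((BoundedContinuousFunction.evalCLM ℝ x).comp (SchwartzMap.toBoundedContinuousFunctionCLM ℝ ℝ ℝ)).continuous.comp hcont
      have hc2 : Continuous fun r => deriv (⇑(u r)) x := by
        have hcc : Continuous fun r => (((BoundedContinuousFunction.evalCLM ℝ x).comp (SchwartzMap.toBoundedContinuousFunctionCLM ℝ ℝ ℝ)).comp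
            (SchwartzMap.derivCLM ℝ ℝ)) (u r) :=
          (((BoundedContinuousFunction.evalCLM ℝ x).comp (SchwartzMap.toBoundedContinuousFunctionCLM ℝ ℝ ℝ)).comp (SchwartzMap.derivCLM ℝ ℝ)).continuous.comp hcont
        have heq : (fun r => (((BoundedContinuousFunction.evalCLM ℝ x).comp (SchwartzMap.toBoundedContinuousFunctionCLM ℝ ℝ ℝ)).comp
            (SchwartzMap.derivCLM ℝ ℝ)) (u r)) = fun r => deriv (⇑(u r)) x := by
          funext r
          simp [SchwartzMap.derivCLM_apply]
        rwa [heq] at hcc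
      have : Continuous fun r => hfun k (u r) x := by
        unfold hfun; fun_prop
      exact this.continuousWithinAt
  have hmid : T / 2 ∈ V := ⟨by linarith, by linarith⟩
  have hclV : ∀ e ∈ Set.Icc (0:ℝ) T, e ∈ closure V := by
    intro e he
    rw [hVdef, closure_Ioo (ne_of_lt hT)]
    exact he
  have hend : ∀ e ∈ Set.Icc (0:ℝ) T, H e = H (T / 2) := by
    intro e he
    have hne : (𝓝[V] e).NeBot := mem_closure_iff_nhdsWithin_neBot.1 (hclV e he)
    have l1 : Tendsto H (𝓝[V] e) (𝓝 (H e)) :=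
      (HcontIcc e he).mono_left (nhdsWithin_mono e hVIcc)
    have l2 : Tendsto H (𝓝[V] e) (𝓝 (H (T / 2))) := by
      refine Filter.Tendsto.congr' ?_ tendsto_const_nhds
      filter_upwards [self_mem_nhdsWithin] with r hr
      exact hconstV (T / 2) hmid r hr
    exact tendsto_nhds_unique l1 l2
  intro t ht
  have hfinal : H t = H 0 := by
    rw [hend t ht, hend 0 (Set.left_mem_Icc.2 hT.le)]
  have e : ∀ s : ℝ, H2CH k (⇑(u s)) = (1 / 2) * H s := fun s => rfl
  rw [e t, e 0, hfinal]
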